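/- Let (Σ, μ) be a measure space, ρ : Σ → ℝ a measurable function with ρ(z) > 0 for all z, g ∈ ℝ a constant, and let σ : ℝ² × Σ → ℝ, H, L : ℝ² × Σ → ℝ and φ : ℝ² × Σ → ℂ be functions such that for every z ∈ Σ the maps s ↦ σ(s,z), s ↦ H(s,z), s ↦ L(s,z), s ↦ φ(s,z) are twice continuously differentiable with σ(s,z) > 0, σ(0,z) = ρ(z), H(s,z)·L(s,z) = |φ(s,z)|²/σ(s,z)², L(s,z) ≥ 0, φ(0,z) = 0, H(0,z) = 1; suppose moreover that H·σ, L·σ and their first and second s-partial derivatives are dominated, uniformly for s in a neighborhood of 0, by μ-integrable functions of z (so that differentiation under the integral sign is valid), and that ∫_Σ (H(s,z) − L(s,z))·σ(s,z) dμ(z) = g for all s near 0. Define E(s) = ∫_Σ (H(s,z) + L(s,z))·σ(s,z) dμ(z). Then E(s) = g + 2∫_Σ L(s,z)σ(s,z) dμ(z) ≥ g = E(0) for all s near 0, both first partial derivatives of E vanish at s = 0, and for all i, j ∈ {1,2}: ∂²E/∂sᵢ∂sⱼ(0) = 4 ∫_Σ Re(∂φ/∂sᵢ(0,z) · conj(∂φ/∂sⱼ(0,z)))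 / ρ(z) dμ(z). -/

import Mathlib

/-!
Write `A = H σ` and `B = L σ`, so that `A B = |φ|²`, `B ≥ 0`, `A(0) = ρ` and `B(0) = 0`.
Since `∫ (A - B) = g`, the energy is `E = g + 2 ∫ B ≥ g = E(0)`, so `s = 0` is a minimum of `E`
and of every `B(·, z)`. Differentiating `A B = |φ|²` twice at `s = 0`, every term containing
`B(0)` or `dB(0)` drops out and `ρ d²B(0)(w, v) = 2 ⟪dφ(0) w, dφ(0) v⟫`; differentiating twice
under the integral sign then gives the second variation of `E = g + 2 ∫ B`.
-/

open MeasureTheory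

/-- The two standard basis directions of `ℝ²`. -/
noncomputable def e2 : Fin 2 → ℝ × ℝ := ![(1, 0), (0, 1)]

open Filter Topology

theorem integral_add_mul_eq_integral_sub_mul_add {Ω : Type*} [MeasurableSpace Ω] {μ : Measure Ω} {a b c : Ω → ℝ}
    (ha : Integrable (fun z => a z * c z) μ) (hb : Integrable (fun z => b z * c z) μ) :
    ∫ z, (a z + b z) * c z ∂μ = ∫ z, (a z - b z) * c z ∂μ + 2 * ∫ z, b z * c z ∂μ := by
  simp only [add_mul, sub_mul]
  rw [integral_add ha hb, integral_sub ha hb]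
  ring

theorem MeasureTheory.Integrable.of_norm_add_norm_le {Ω G G' : Type*} [MeasurableSpace Ω] {μ : Measure Ω}
    [NormedAddCommGroup G] [NormedAddCommGroup G'] {f : Ω → G} {f' : Ω → G'} {B : Ω → ℝ}
    (hf : AEStronglyMeasurable f μ) (hB : Integrable B μ) (h : ∀ z, ‖f z‖ + ‖f' z‖ ≤ B z) :
    Integrable f μ :=
  hB.mono' hf (ae_of_all _ fun z => (le_add_of_nonneg_right (norm_nonneg _)).trans (h z))

theorem ContinuousLinearMap.continuous_bilinearComp_self {E F G : Type*}
    [NormedAddCommGroup E] [NormedSpace ℝ E] [NormedAddCommGroup F] [NormedSpace ℝ F]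
    [NormedAddCommGroup G] [NormedSpace ℝ G] (β : F →L[ℝ] F →L[ℝ] G) :
    Continuous fun T : E →L[ℝ] F => β.bilinearComp T T := by
  have h : (fun T : E →L[ℝ] F => β.bilinearComp T T) =
      fun T => ((ContinuousLinearMap.compL ℝ E F G).flip T).comp (β.comp T) := by
    ext; rfl
  rw [h]
  exact (ContinuousLinearMap.compL ℝ E F G).flip.continuous.clm_comp
    (continuous_const.clm_comp continuous_id)

section SecondDerivative

variable {E F G : Type*} [NormedAddCommGroup E] [NormedSpace ℝ E]
  [NormedAddCommGroup F] [InnerProductSpace ℝ F] [NormedAddCommGroup G] [NormedSpace ℝ G]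

theorem ContDiff.differentiable_fderiv {f : E → G} (hf : ContDiff ℝ 2 f) :
    Differentiable ℝ (fderiv ℝ f) :=
  (hf.fderiv_right (m := 1) le_rfl).differentiable one_ne_zero

theorem hasFDerivAt_fderiv_apply {f : E → G} {x : E} (hf : DifferentiableAt ℝ (fderiv ℝ f) x)
    (v : E) : HasFDerivAt (fun s => fderiv ℝ f s v) ((fderiv ℝ (fderiv ℝ f) x).flip v) x := by
  simpa only [ContinuousLinearMap.comp_zero, zero_add] using
    hf.hasFDerivAt.clm_apply (hasFDerivAt_const v x)

theorem norm_fderiv_fderiv_flip_apply_le (f : E → G) (x v : E) :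
    ‖(fderiv ℝ (fderiv ℝ f) x).flip v‖ ≤ ‖iteratedFDeriv ℝ 2 f x‖ * ‖v‖ := by
  rw [← norm_iteratedFDeriv_fderiv (n := 1), norm_iteratedFDeriv_one,
    ← ContinuousLinearMap.opNorm_flip]
  exact ContinuousLinearMap.le_opNorm _ v

theorem fderiv_fderiv_apply_of_eventuallyEq_const_add_mul {f I : E → ℝ} {x : E} {a c : ℝ}
    (h : f =ᶠ[𝓝 x] fun s => a + c * I s) (v w : E) :
    fderiv ℝ (fun s => fderiv ℝ f s v) x w = c * fderiv ℝ (fun s => fderiv ℝ I s v) x w := by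
  have hD : (fun s => fderiv ℝ f s v) =ᶠ[𝓝 x] c • fun s => fderiv ℝ I s v := by
    filter_upwards [h.fderiv (𝕜 := ℝ)] with s hs
    rw [hs, fderiv_const_add, show (fun s => c * I s) = c • I from rfl,
      fderiv_const_smul_field]
    rfl
  rw [hD.fderiv_eq, fderiv_const_smul_field]
  rfl

theorem fderiv_fderiv_mul_apply {f g : E → ℝ} (hf : ContDiff ℝ 2 f) (hg : ContDiff ℝ 2 g)
    (x w v : E) :
    fderiv ℝ (fderiv ℝ fun y => f y * g y) x w v =
      f x * fderiv ℝ (fderiv ℝ g) x w v + fderiv ℝ f x w * fderiv ℝ g x v +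
        g x * fderiv ℝ (fderiv ℝ f) x w v + fderiv ℝ g x w * fderiv ℝ f x v := by
  have hfd := hf.differentiable two_ne_zero
  have hgd := hg.differentiable two_ne_zero
  have hD : (fun s => fderiv ℝ (fun y => f y * g y) s v) =
      fun s => f s * fderiv ℝ g s v + g s * fderiv ℝ f s v := by
    funext s
    simp only [fderiv_fun_mul (hfd s) (hgd s), add_apply, smul_apply, smul_eq_mul]
  have h : HasFDerivAt (fun s => f s * fderiv ℝ g s v + g s * fderiv ℝ f s v) _ x :=
    ((hfd x).hasFDerivAt.mul (hasFDerivAt_fderiv_apply (hg.differentiable_fderiv x) v)).add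
      ((hgd x).hasFDerivAt.mul (hasFDerivAt_fderiv_apply (hf.differentiable_fderiv x) v))
  rw [← ContinuousLinearMap.flip_apply,
    ← (hasFDerivAt_fderiv_apply ((hf.mul hg).differentiable_fderiv x) v).fderiv, hD, h.fderiv]
  simp only [add_apply, smul_apply, ContinuousLinearMap.flip_apply, smul_eq_mul]
  ring

theorem fderiv_fderiv_norm_sq_apply {p : E → F} (hp : ContDiff ℝ 2 p) (x w v : E) :
    fderiv ℝ (fderiv ℝ fun y => ‖p y‖ ^ 2) x w v =
      2 * (inner ℝ (fderiv ℝ p x w) (fderiv ℝ p x v) +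
        inner ℝ (p x) (fderiv ℝ (fderiv ℝ p) x w v)) := by
  have hpd := hp.differentiable two_ne_zero
  have hD : (fun s => fderiv ℝ (fun y => ‖p y‖ ^ 2) s v) =
      fun s => 2 * inner ℝ (p s) (fderiv ℝ p s v) := by
    funext s
    simp only [(hpd s).hasFDerivAt.norm_sq.fderiv, smul_apply, ContinuousLinearMap.comp_apply,
      coe_innerSL_apply, nsmul_eq_mul, Nat.cast_ofNat]
  rw [← ContinuousLinearMap.flip_apply,
    ← (hasFDerivAt_fderiv_apply ((hp.norm_sq ℝ).differentiable_fderiv x) v).fderiv, hD,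
    (((hpd x).hasFDerivAt.inner ℝ
      (hasFDerivAt_fderiv_apply (hp.differentiable_fderiv x) v)).const_mul 2).fderiv]
  simp only [smul_apply, ContinuousLinearMap.comp_apply, ContinuousLinearMap.prod_apply,
    ContinuousLinearMap.flip_apply, fderivInnerCLM_apply, smul_eq_mul]
  ring

theorem fderiv_fderiv_of_mul_eq_norm_sq {a b : E → ℝ} {p : E → F} {x₀ : E}
    (ha : ContDiff ℝ 2 a) (hb : ContDiff ℝ 2 b) (hp : ContDiff ℝ 2 p)
    (hab : ∀ s, a s * b s = ‖p s‖ ^ 2) (hb_nonneg : ∀ᶠ s in 𝓝 x₀, 0 ≤ b s)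
    (ha₀ : a x₀ ≠ 0) (hp₀ : p x₀ = 0) :
    fderiv ℝ (fderiv ℝ b) x₀ =
      (2 / a x₀) • (innerSL ℝ).bilinearComp (fderiv ℝ p x₀) (fderiv ℝ p x₀) := by
  have hb₀ : b x₀ = 0 := by simpa [hp₀, ha₀] using hab x₀
  have hmin : IsLocalMin b x₀ := hb_nonneg.mono fun s hs => hb₀ ▸ hs
  ext w v
  have h := fderiv_fderiv_mul_apply ha hb x₀ w v
  rw [funext hab, fderiv_fderiv_norm_sq_apply hp, hb₀, hmin.fderiv_eq_zero, hp₀] at h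
  simp only [zero_apply, mul_zero, zero_mul, add_zero, inner_zero_left] at h
  simp only [smul_apply, ContinuousLinearMap.bilinearComp_apply, coe_innerSL_apply, smul_eq_mul]
  field_simp
  linarith

theorem fderiv_fderiv_mul_of_mul_eq_norm_sq_div_sq {h l σ : E → ℝ} {p : E → F} {x₀ : E}
    (hh : ContDiff ℝ 2 h) (hl : ContDiff ℝ 2 l) (hσ : ContDiff ℝ 2 σ) (hp : ContDiff ℝ 2 p)
    (hσ_pos : ∀ s, 0 < σ s) (hhl : ∀ s, h s * l s = ‖p s‖ ^ 2 / σ s ^ 2)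
    (hl_nonneg : ∀ s, 0 ≤ l s) (hh₀ : h x₀ = 1) (hp₀ : p x₀ = 0) :
    fderiv ℝ (fderiv ℝ fun s => l s * σ s) x₀ =
      (2 / σ x₀) • (innerSL ℝ).bilinearComp (fderiv ℝ p x₀) (fderiv ℝ p x₀) := by
  have hprod : ∀ s, h s * σ s * (l s * σ s) = ‖p s‖ ^ 2 := fun s => by
    have hs := hhl s
    field_simp [(hσ_pos s).ne'] at hs
    linear_combination hs
  simpa only [hh₀, one_mul] using fderiv_fderiv_of_mul_eq_norm_sq (hh.mul hσ) (hl.mul hσ) hp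
    hprod (Eventually.of_forall fun s => mul_nonneg (hl_nonneg s) (hσ_pos s).le)
    (by simpa only [hh₀, one_mul] using (hσ_pos x₀).ne') hp₀

end SecondDerivative

section ParametricIntegral

variable {Ω E G : Type*} [MeasurableSpace Ω] {μ : Measure Ω} [NormedAddCommGroup E]
  [NormedSpace ℝ E] [NormedAddCommGroup G] [NormedSpace ℝ G]
  {F : E → Ω → G} {U : Set E} {s₀ : E}

theorem fderiv_integral_apply_of_norm_fderiv_le {bound : Ω → ℝ} (hU : U ∈ 𝓝 s₀)
    (hF_meas : ∀ s ∈ U, AEStronglyMeasurable (F s) μ) (hF_int : Integrable (F s₀) μ)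
    (hF'_meas : AEStronglyMeasurable (fun z => fderiv ℝ (F · z) s₀) μ)
    (hF_diff : ∀ z, ∀ s ∈ U, DifferentiableAt ℝ (F · z) s)
    (h_bound : ∀ z, ∀ s ∈ U, ‖fderiv ℝ (F · z) s‖ ≤ bound z) (hbound : Integrable bound μ)
    (v : E) :
    fderiv ℝ (fun s => ∫ z, F s z ∂μ) s₀ v = ∫ z, fderiv ℝ (F · z) s₀ v ∂μ := by
  have hF'_int : Integrable (fun z => fderiv ℝ (F · z) s₀) μ :=
    hbound.mono' hF'_meas (ae_of_all _ fun z => h_bound z s₀ (mem_of_mem_nhds hU))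
  rw [(hasFDerivAt_integral_of_dominated_of_fderiv_le hU (eventually_of_mem hU hF_meas) hF_int
    hF'_meas (ae_of_all _ h_bound) hbound
    (ae_of_all _ fun z s hs => (hF_diff z s hs).hasFDerivAt)).fderiv,
    ContinuousLinearMap.integral_apply hF'_int]

theorem fderiv_fderiv_integral_apply {B₁ B₂ : Ω → ℝ} (hU : IsOpen U) (hs₀ : s₀ ∈ U)
    (hF : ∀ z, ContDiff ℝ 2 (F · z)) (hF_int : ∀ s ∈ U, Integrable (F s) μ)
    (hF'_meas : ∀ s ∈ U, AEStronglyMeasurable (fun z => fderiv ℝ (F · z) s) μ)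
    (hF''_meas : AEStronglyMeasurable (fun z => fderiv ℝ (fderiv ℝ (F · z)) s₀) μ)
    (h_bound₁ : ∀ z, ∀ s ∈ U, ‖fderiv ℝ (F · z) s‖ ≤ B₁ z) (hB₁ : Integrable B₁ μ)
    (h_bound₂ : ∀ z, ∀ s ∈ U, ‖iteratedFDeriv ℝ 2 (F · z) s‖ ≤ B₂ z) (hB₂ : Integrable B₂ μ)
    (w v : E) :
    fderiv ℝ (fun s => fderiv ℝ (fun s' => ∫ z, F s' z ∂μ) s v) s₀ w =
      ∫ z, fderiv ℝ (fderiv ℝ (F · z)) s₀ w v ∂μ := by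
  have hF' : ∀ z s, HasFDerivAt (fun s => fderiv ℝ (F · z) s v)
      ((fderiv ℝ (fderiv ℝ (F · z)) s).flip v) s :=
    fun z s => hasFDerivAt_fderiv_apply ((hF z).differentiable_fderiv s) v
  have hD : (fun s => fderiv ℝ (fun s' => ∫ z, F s' z ∂μ) s v) =ᶠ[𝓝 s₀]
      fun s => ∫ z, fderiv ℝ (F · z) s v ∂μ :=
    eventually_of_mem (hU.mem_nhds hs₀) fun s hs =>
      fderiv_integral_apply_of_norm_fderiv_le (hU.mem_nhds hs)
        (fun s' hs' => (hF_int s' hs').aestronglyMeasurable) (hF_int s hs) (hF'_meas s hs)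
        (fun z s' _ => (hF z).differentiable two_ne_zero s') h_bound₁ hB₁ v
  have hF'' : ∀ z, fderiv ℝ (fderiv ℝ (F · z)) s₀ w v =
      fderiv ℝ (fun s => fderiv ℝ (F · z) s v) s₀ w := fun z => by
    rw [(hF' z s₀).fderiv]; rfl
  have happly := (ContinuousLinearMap.apply ℝ G v).continuous
  rw [hD.fderiv_eq]
  simp only [hF'']
  refine fderiv_integral_apply_of_norm_fderiv_le (F := fun s z => fderiv ℝ (F · z) s v)
    (bound := fun z => B₂ z * ‖v‖)
    (hU.mem_nhds hs₀) (fun s hs => happly.comp_aestronglyMeasurable (hF'_meas s hs)) ?_ ?_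
    (fun z s _ => (hF' z s).differentiableAt) (fun z s hs => ?_) (hB₂.mul_const _) w
  · exact (hB₁.mul_const ‖v‖).mono' (happly.comp_aestronglyMeasurable (hF'_meas s₀ hs₀))
      (ae_of_all _ fun z => ((fderiv ℝ (F · z) s₀).le_opNorm v).trans
        (mul_le_mul_of_nonneg_right (h_bound₁ z s₀ hs₀) (norm_nonneg v)))
  · simp only [fun z => (hF' z s₀).fderiv]
    exact ((ContinuousLinearMap.apply ℝ (E →L[ℝ] G) v).continuous.comp
      (ContinuousLinearMap.flipₗᵢ ℝ E E G).continuous).comp_aestronglyMeasurable hF''_meas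
  · rw [(hF' z s).fderiv]
    exact (norm_fderiv_fderiv_flip_apply_le _ s v).trans
      (mul_le_mul_of_nonneg_right (h_bound₂ z s hs) (norm_nonneg v))

end ParametricIntegral

theorem second_variation_energy_varying_domain_general
    {Ω : Type*} [MeasurableSpace Ω] (μ : Measure Ω)
    (ρ : Ω → ℝ) (hρmeas : Measurable ρ) (g : ℝ)
    (σ : ℝ × ℝ → Ω → ℝ) (H L : ℝ × ℝ → Ω → ℝ) (φ : ℝ × ℝ → Ω → ℂ)
    (hσdiff : ∀ z, ContDiff ℝ 2 (fun s => σ s z))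
    (hHdiff : ∀ z, ContDiff ℝ 2 (fun s => H s z))
    (hLdiff : ∀ z, ContDiff ℝ 2 (fun s => L s z))
    (hφdiff : ∀ z, ContDiff ℝ 2 (fun s => φ s z))
    (hσpos : ∀ s z, 0 < σ s z) (hσ0 : ∀ z, σ 0 z = ρ z)
    (heq : ∀ s z, H s z * L s z = (‖φ s z‖) ^ 2 / (σ s z) ^ 2)
    (hLnonneg : ∀ s z, 0 ≤ L s z)
    (hφ0 : ∀ z, φ 0 z = 0) (hH0 : ∀ z, H 0 z = 1)
    -- measurability in `z` of the integrands and their variations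
    (hHσmeas : ∀ s, AEStronglyMeasurable (fun z => H s z * σ s z) μ)
    (hLσmeas : ∀ s, AEStronglyMeasurable (fun z => L s z * σ s z) μ)
    (hLσ1meas : ∀ s, AEStronglyMeasurable
      (fun z => fderiv ℝ (fun u => L u z * σ u z) s) μ)
    (hφ1meas : ∀ s, AEStronglyMeasurable (fun z => fderiv ℝ (fun u => φ u z) s) μ)
    -- uniform domination of `H·σ`, `L·σ` and their `s`-derivatives near `s = 0`
    (ε : ℝ) (hε : 0 < ε) (B₀ B₁ B₂ : Ω → ℝ)
    (hB₀ : Integrable B₀ μ) (hB₁ : Integrable B₁ μ) (hB₂ : Integrable B₂ μ)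
    (hdom₀ : ∀ s z, ‖s‖ < ε → |H s z * σ s z| + |L s z * σ s z| ≤ B₀ z)
    (hdom₁ : ∀ s z, ‖s‖ < ε →
      ‖fderiv ℝ (fun u => H u z * σ u z) s‖ +
        ‖fderiv ℝ (fun u => L u z * σ u z) s‖ ≤ B₁ z)
    (hdom₂ : ∀ s z, ‖s‖ < ε →
      ‖iteratedFDeriv ℝ 2 (fun u => H u z * σ u z) s‖ +
        ‖iteratedFDeriv ℝ 2 (fun u => L u z * σ u z) s‖ ≤ B₂ z)
    -- the Jacobian integral is the constant `g` near `s = 0`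
    (hJ : ∀ s, ‖s‖ < ε → (∫ z, (H s z - L s z) * σ s z ∂μ) = g)
    -- the energy functional
    (E : ℝ × ℝ → ℝ) (hE : E = fun s => ∫ z, (H s z + L s z) * σ s z ∂μ) :
    (∀ s, ‖s‖ < ε → E s = g + 2 * ∫ z, L s z * σ s z ∂μ) ∧
    (∀ s, ‖s‖ < ε → g ≤ E s) ∧
    E 0 = g ∧
    (∀ i : Fin 2, fderiv ℝ E 0 (e2 i) = 0) ∧
    (∀ i j : Fin 2,
      fderiv ℝ (fun s => fderiv ℝ E s (e2 i)) 0 (e2 j) =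
        4 * ∫ z, ((fderiv ℝ (fun u => φ u z) 0 (e2 i)) *
            (starRingEnd ℂ) (fderiv ℝ (fun u => φ u z) 0 (e2 j))).re / ρ z ∂μ) := by
  subst hE
  have hHσ_int : ∀ s, ‖s‖ < ε → Integrable (fun z => H s z * σ s z) μ := fun s hs =>
    Integrable.of_norm_add_norm_le (f' := fun z => L s z * σ s z) (hHσmeas s) hB₀
      fun z => hdom₀ s z hs
  have hLσ_int : ∀ s, ‖s‖ < ε → Integrable (fun z => L s z * σ s z) μ := fun s hs =>
    Integrable.of_norm_add_norm_le (f' := fun z => H s z * σ s z) (hLσmeas s) hB₀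
      fun z => (add_comm _ _).trans_le (hdom₀ s z hs)
  have hE_eq : ∀ s, ‖s‖ < ε →
      (∫ z, (H s z + L s z) * σ s z ∂μ) = g + 2 * ∫ z, L s z * σ s z ∂μ := fun s hs => by
    rw [integral_add_mul_eq_integral_sub_mul_add (hHσ_int s hs) (hLσ_int s hs), hJ s hs]
  have hE_ge : ∀ s, ‖s‖ < ε → g ≤ ∫ z, (H s z + L s z) * σ s z ∂μ := fun s hs =>
    hE_eq s hs ▸ le_add_of_nonneg_right (mul_nonneg zero_le_two
      (integral_nonneg fun z => mul_nonneg (hLnonneg s z) (hσpos s z).le))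
  have hE₀ : (∫ z, (H 0 z + L 0 z) * σ 0 z ∂μ) = g := by
    have hL₀ : ∀ z, L 0 z = 0 := fun z => by simpa [hφ0 z, hH0 z] using heq 0 z
    simpa [hL₀] using hE_eq 0 (by simpa using hε)
  have hmin : IsLocalMin (fun s => ∫ z, (H s z + L s z) * σ s z ∂μ) 0 :=
    eventually_of_mem (Metric.ball_mem_nhds 0 hε) fun s hs =>
      hE₀.trans_le (hE_ge s (mem_ball_zero_iff.1 hs))
  refine ⟨hE_eq, hE_ge, hE₀, fun i => by rw [hmin.fderiv_eq_zero]; rfl, fun i j => ?_⟩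
  have hLσ'' : ∀ z, fderiv ℝ (fderiv ℝ fun s => L s z * σ s z) 0 =
      (2 / ρ z) • (innerSL ℝ).bilinearComp (fderiv ℝ (φ · z) 0) (fderiv ℝ (φ · z) 0) := fun z =>
    hσ0 z ▸ fderiv_fderiv_mul_of_mul_eq_norm_sq_div_sq (hHdiff z) (hLdiff z) (hσdiff z)
      (hφdiff z) (hσpos · z) (heq · z) (hLnonneg · z) (hH0 z) (hφ0 z)
  have hLσ''_meas :
      AEStronglyMeasurable (fun z => fderiv ℝ (fderiv ℝ fun s => L s z * σ s z) 0) μ := by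
    simp only [hLσ'']
    exact (hρmeas.const_div 2).aestronglyMeasurable.smul
      ((innerSL ℝ).continuous_bilinearComp_self.comp_aestronglyMeasurable (hφ1meas 0))
  rw [fderiv_fderiv_apply_of_eventuallyEq_const_add_mul (eventually_of_mem
      (Metric.ball_mem_nhds 0 hε) fun s hs => hE_eq s (mem_ball_zero_iff.1 hs)),
    fderiv_fderiv_integral_apply (F := fun s z => L s z * σ s z) Metric.isOpen_ball
      (Metric.mem_ball_self hε) (fun z => (hLdiff z).mul (hσdiff z))
      (fun s hs => hLσ_int s (mem_ball_zero_iff.1 hs)) (fun s _ => hLσ1meas s) hLσ''_meas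
      (fun z s hs => (le_add_of_nonneg_left (norm_nonneg _)).trans
        (hdom₁ s z (mem_ball_zero_iff.1 hs))) hB₁
      (fun z s hs => (le_add_of_nonneg_left (norm_nonneg _)).trans
        (hdom₂ s z (mem_ball_zero_iff.1 hs))) hB₂]
  simp only [hLσ'', smul_apply, ContinuousLinearMap.bilinearComp_apply, innerSL_apply_apply,
    Complex.inner, smul_eq_mul, ← integral_const_mul]
  congr 1 with z
  ring

/-- Analytic content of Theorem 1.3 (varying the domain): for a two-parameter family of
densities `H, L` and domain metrics `σ(s)` with `σ(0) = ρ`, `H·L = |φ|²/σ(s)²`,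
`φ(0,·) = 0`, `H(0,·) = 1`, `L ≥ 0`, with the integrands `H·σ`, `L·σ` and their
`s`-derivatives dominated (uniformly near `s = 0`) by integrable functions so that
differentiation under the integral sign is valid, and with constant Jacobian integral
`∫ (H − L)σ(s) = g`, the energy `E(s) = ∫ (H + L)σ(s)` satisfies
`E(s) = g + 2∫Lσ(s) ≥ g = E(0)`, has a critical point at `s = 0`, and its second
variation there is `4 ∫ Re(∂ᵢφ · conj(∂ⱼφ))/ρ`, i.e. the `L²`-Bergman pairing
(up to a constant). -/
theorem second_variation_energy_varying_domain
    {Ω : Type*} [MeasurableSpace Ω] (μ : Measure Ω)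
    (ρ : Ω → ℝ) (hρmeas : Measurable ρ) (hρpos : ∀ z, 0 < ρ z) (g : ℝ)
    (σ : ℝ × ℝ → Ω → ℝ) (H L : ℝ × ℝ → Ω → ℝ) (φ : ℝ × ℝ → Ω → ℂ)
    (hσdiff : ∀ z, ContDiff ℝ 2 (fun s => σ s z))
    (hHdiff : ∀ z, ContDiff ℝ 2 (fun s => H s z))
    (hLdiff : ∀ z, ContDiff ℝ 2 (fun s => L s z))
    (hφdiff : ∀ z, ContDiff ℝ 2 (fun s => φ s z))
    (hσpos : ∀ s z, 0 < σ s z) (hσ0 : ∀ z, σ 0 z = ρ z)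
    (heq : ∀ s z, H s z * L s z = (‖φ s z‖) ^ 2 / (σ s z) ^ 2)
    (hLnonneg : ∀ s z, 0 ≤ L s z)
    (hφ0 : ∀ z, φ 0 z = 0) (hH0 : ∀ z, H 0 z = 1)
    -- measurability in `z` of the integrands and their variations
    (hHσmeas : ∀ s, AEStronglyMeasurable (fun z => H s z * σ s z) μ)
    (hLσmeas : ∀ s, AEStronglyMeasurable (fun z => L s z * σ s z) μ)
    (hHσ1meas : ∀ s, AEStronglyMeasurable
      (fun z => fderiv ℝ (fun u => H u z * σ u z) s) μ)
    (hLσ1meas : ∀ s, AEStronglyMeasurable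
      (fun z => fderiv ℝ (fun u => L u z * σ u z) s) μ)
    (hφ1meas : ∀ s, AEStronglyMeasurable (fun z => fderiv ℝ (fun u => φ u z) s) μ)
    -- uniform domination of `H·σ`, `L·σ` and their `s`-derivatives near `s = 0`
    (ε : ℝ) (hε : 0 < ε) (B₀ B₁ B₂ : Ω → ℝ)
    (hB₀ : Integrable B₀ μ) (hB₁ : Integrable B₁ μ) (hB₂ : Integrable B₂ μ)
    (hdom₀ : ∀ s z, ‖s‖ < ε → |H s z * σ s z| + |L s z * σ s z| ≤ B₀ z)
    (hdom₁ : ∀ s z, ‖s‖ < ε →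
      ‖fderiv ℝ (fun u => H u z * σ u z) s‖ +
        ‖fderiv ℝ (fun u => L u z * σ u z) s‖ ≤ B₁ z)
    (hdom₂ : ∀ s z, ‖s‖ < ε →
      ‖iteratedFDeriv ℝ 2 (fun u => H u z * σ u z) s‖ +
        ‖iteratedFDeriv ℝ 2 (fun u => L u z * σ u z) s‖ ≤ B₂ z)
    -- the Jacobian integral is the constant `g` near `s = 0`
    (hJ : ∀ s, ‖s‖ < ε → (∫ z, (H s z - L s z) * σ s z ∂μ) = g)
    -- the energy functional
    (E : ℝ × ℝ → ℝ) (hE : E = fun s => ∫ z, (H s z + L s z) * σ s z ∂μ) :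
    (∀ s, ‖s‖ < ε → E s = g + 2 * ∫ z, L s z * σ s z ∂μ) ∧
    (∀ s, ‖s‖ < ε → g ≤ E s) ∧
    E 0 = g ∧
    (∀ i : Fin 2, fderiv ℝ E 0 (e2 i) = 0) ∧
    (∀ i j : Fin 2,
      fderiv ℝ (fun s => fderiv ℝ E s (e2 i)) 0 (e2 j) =
        4 * ∫ z, ((fderiv ℝ (fun u => φ u z) 0 (e2 i)) *
            (starRingEnd ℂ) (fderiv ℝ (fun u => φ u z) 0 (e2 j))).re / ρ z ∂μ) :=
  second_variation_energy_varying_domain_general μ ρ hρmeas g σ H L φ hσdiff hHdiff hLdiff hφdiff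
    hσpos hσ0 heq hLnonneg hφ0 hH0 hHσmeas hLσmeas hLσ1meas hφ1meas ε hε B₀ B₁ B₂ hB₀ hB₁ hB₂ hdom₀
    hdom₁ hdom₂ hJ E hE
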